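/- Let C be a semigroupal category over R and suppose α⁽⁰⁾ = α, α⁽¹⁾, ..., α⁽ᴹ⁻¹⁾ define an (M−1)-st order deformation (so the pentagon holds mod ε^M). Then the obstruction 4-cochain ω⁽ᴹ⁾_{A,B,C,D} = Σ_{i+j=M, 0≤i,j<M} ⌈α⁽ⁱ⁾_{A⊗B,C,D}∘α⁽ʲ⁾_{A,B,C⊗D}⌉ − Σ_{i+j+k=M, 0≤i,j,k<M} ⌈(α⁽ⁱ⁾_{A,B,C}⊗D)∘α⁽ʲ⁾_{A,B⊗C,D}∘(A⊗α⁽ᵏ⁾_{B,C,D})⌉ is a 4-cocycle in X^•(C), i.e., δ(ω⁽ᴹ⁾) = 0. -/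

import Mathlib

/-!
STATEMENT 16: For an `(M-1)`-st order deformation `α⁽⁰⁾ = α, α⁽¹⁾, …, α⁽ᴹ⁻¹⁾` of the
associator of a semigroupal category `C` (the pentagon holds mod `ε^M`, i.e.
`δ(α⁽ᴺ⁾) + ω⁽ᴺ⁾ = 0` for all `0 < N < M`), the obstruction `4`-cochain
`ω⁽ᴹ⁾ = Σ_{i+j=M, i,j<M} ⌈α⁽ⁱ⁾_{A⊗B,C,D} ∘ α⁽ʲ⁾_{A,B,C⊗D}⌉
      − Σ_{i+j+k=M, i,j,k<M} ⌈(α⁽ⁱ⁾_{A,B,C} ⊗ D) ∘ α⁽ʲ⁾_{A,B⊗C,D} ∘ (A ⊗ α⁽ᵏ⁾_{B,C,D})⌉`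
is a 4-cocycle: `δ(ω⁽ᴹ⁾) = 0`.
-/

open CategoryTheory MonoidalCategory

set_option maxHeartbeats 1000000

universe v u

variable {C : Type u} [Category.{v} C] [MonoidalCategory C] [Preadditive C]
  [MonoidalPreadditive C]

/-- The deformation coboundary `δφ = Σ_{i=0}^{4} (-1)^{i+1} ∂ᵢ φ` of a `3`-cochain,
with faces padded by prolongations of the associator. -/
def delta3 (φ : ∀ A B C' : C, (A ⊗ B) ⊗ C' ⟶ A ⊗ (B ⊗ C')) (A B C' D : C) :
    ((A ⊗ B) ⊗ C') ⊗ D ⟶ A ⊗ (B ⊗ (C' ⊗ D)) :=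
  - (((α_ A B C').hom ▷ D) ≫ (α_ A (B ⊗ C') D).hom ≫ (A ◁ φ B C' D))
  + (φ (A ⊗ B) C' D ≫ (α_ A B (C' ⊗ D)).hom)
  - (((α_ A B C').hom ▷ D) ≫ φ A (B ⊗ C') D ≫ (A ◁ (α_ B C' D).hom))
  + ((α_ (A ⊗ B) C' D).hom ≫ φ A B (C' ⊗ D))
  - ((φ A B C' ▷ D) ≫ (α_ A (B ⊗ C') D).hom ≫ (A ◁ (α_ B C' D).hom))

/-- The deformation coboundary `δψ = Σ_{i=0}^{5} (-1)^{i+1} ∂ᵢ ψ` of a `4`-cochain,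
with faces padded by prolongations of the associator. -/
def delta4 (ψ : ∀ A B C' D : C, ((A ⊗ B) ⊗ C') ⊗ D ⟶ A ⊗ (B ⊗ (C' ⊗ D)))
    (A B C' D E : C) :
    ((((A ⊗ B) ⊗ C') ⊗ D) ⊗ E) ⟶ A ⊗ (B ⊗ (C' ⊗ (D ⊗ E))) :=
  - (((α_ A B C').hom ▷ D ▷ E) ≫ ((α_ A (B ⊗ C') D).hom ▷ E) ≫
      (α_ A ((B ⊗ C') ⊗ D) E).hom ≫ (A ◁ ψ B C' D E))
  + (ψ (A ⊗ B) C' D E ≫ (α_ A B (C' ⊗ (D ⊗ E))).hom)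
  - (((α_ A B C').hom ▷ D ▷ E) ≫ ψ A (B ⊗ C') D E ≫ (A ◁ (α_ B C' (D ⊗ E)).hom))
  + (((α_ (A ⊗ B) C' D).hom ▷ E) ≫ ψ A B (C' ⊗ D) E ≫ (A ◁ (B ◁ (α_ C' D E).hom)))
  - ((α_ ((A ⊗ B) ⊗ C') D E).hom ≫ ψ A B C' (D ⊗ E))
  + ((ψ A B C' D ▷ E) ≫ (α_ A (B ⊗ (C' ⊗ D)) E).hom ≫
      (A ◁ (α_ B (C' ⊗ D) E).hom) ≫ (A ◁ (B ◁ (α_ C' D E).hom)))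

/-- The obstruction `4`-cochain `ω⁽ᴺ⁾` associated to a family `α⁽⁰⁾, α⁽¹⁾, …`. -/
def obstruction (αf : ℕ → ∀ A B C' : C, (A ⊗ B) ⊗ C' ⟶ A ⊗ (B ⊗ C')) (N : ℕ)
    (A B C' D : C) : ((A ⊗ B) ⊗ C') ⊗ D ⟶ A ⊗ (B ⊗ (C' ⊗ D)) :=
  (∑ p ∈ (Finset.HasAntidiagonal.antidiagonal N).filter (fun p => p.1 < N ∧ p.2 < N),
      αf p.1 (A ⊗ B) C' D ≫ αf p.2 A B (C' ⊗ D))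
  - (∑ p ∈ Finset.HasAntidiagonal.antidiagonal N, ∑ q ∈ Finset.HasAntidiagonal.antidiagonal p.2,
      if p.1 < N ∧ q.1 < N ∧ q.2 < N then
        (αf p.1 A B C' ▷ D) ≫ αf q.1 A (B ⊗ C') D ≫ (A ◁ αf q.2 B C' D)
      else 0)


/-!
Collect the `α⁽ⁿ⁾`, `n < M`, into a deformed associator `β = ∑ α⁽ⁿ⁾ εⁿ` with coefficients in
the hom-groups, and let `P = β ∘ β - (β ⊗ 1) ∘ β ∘ (1 ⊗ β)` be its pentagon defect. For `n > 0`
the `εⁿ`-coefficient of `P` is `δα⁽ⁿ⁾ + ω⁽ⁿ⁾`, so the pentagon axiom and the hypothesis say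
`P = O(ε^M)`, and the `ε^M`-coefficient of `P` is `ω⁽ᴹ⁾` because `β` has no `ε^M` term. On the
other hand the coboundary of `P` padded with `β` vanishes identically: it is the sum over the six
pentagonal faces of the associahedron `K₅`, which cancel once its three square faces are filled
in by naturality of `β`. Since `P = O(ε^M)`, the `ε^M`-coefficient of that coboundary only sees
`β₀ = α`, and is `δω⁽ᴹ⁾`.
-/

open Finset

theorem Finset.Nat.sum_antidiagonal_eq_ends_add {G : Type*} [AddCommMonoid G] {n : ℕ}
    (hn : 0 < n) (F : ℕ × ℕ → G) :
    ∑ p ∈ antidiagonal n, F p =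
      F (n, 0) + F (0, n) + ∑ p ∈ antidiagonal n with p.1 < n ∧ p.2 < n, F p := by
  rw [← sum_filter_not_add_sum_filter _ (fun p => p.1 < n ∧ p.2 < n)]
  have ends : {p ∈ antidiagonal n | ¬(p.1 < n ∧ p.2 < n)} = {(n, 0), (0, n)} := by
    ext ⟨a, b⟩
    simp only [mem_filter, HasAntidiagonal.mem_antidiagonal, mem_insert, mem_singleton,
      Prod.mk.injEq]
    omega
  rw [ends, sum_pair (by simp; omega)]

theorem Finset.Nat.sum_antidiagonal_sum_antidiagonal_eq_ends_add {G : Type*} [AddCommMonoid G]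
    {n : ℕ} (hn : 0 < n) (F : ℕ → ℕ → ℕ → G) :
    ∑ p ∈ antidiagonal n, ∑ q ∈ antidiagonal p.2, F p.1 q.1 q.2 =
      F n 0 0 + F 0 n 0 + F 0 0 n + ∑ p ∈ antidiagonal n, ∑ q ∈ antidiagonal p.2,
        if p.1 < n ∧ q.1 < n ∧ q.2 < n then F p.1 q.1 q.2 else 0 := by
  rw [sum_sigma', sum_sigma', ← sum_filter,
    ← sum_filter_not_add_sum_filter _ (fun x => x.1.1 < n ∧ x.2.1 < n ∧ x.2.2 < n)]
  have ends : {x ∈ (antidiagonal n).sigma (fun p => antidiagonal p.2) |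
      ¬(x.1.1 < n ∧ x.2.1 < n ∧ x.2.2 < n)} =
        {⟨(n, 0), (0, 0)⟩, ⟨(0, n), (n, 0)⟩, ⟨(0, n), (0, n)⟩} := by
    ext ⟨⟨a, b⟩, c, d⟩
    simp only [mem_filter, mem_sigma, HasAntidiagonal.mem_antidiagonal, mem_insert, mem_singleton,
      Sigma.mk.injEq, Prod.mk.injEq, heq_eq_eq]
    omega
  rw [ends, sum_insert (by simp; omega), sum_pair (by simp; omega)]
  simp only [add_assoc]

/-- A formal power series `∑ fₙ εⁿ` with coefficients `fₙ : X ⟶ Y`. -/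
abbrev HomSeries {C : Type*} [Category C] (X Y : C) := ℕ → (X ⟶ Y)

namespace HomSeries

variable {C : Type*} [Category C]

section Preadditive

variable [Preadditive C] {X Y Y' Z W : C}

def comp (f : HomSeries X Y) (g : HomSeries Y Z) : HomSeries X Z :=
  fun n => ∑ p ∈ antidiagonal n, f p.1 ≫ g p.2

infixr:80 " ≫ₛ " => HomSeries.comp

theorem comp_assoc (f : HomSeries X Y) (g : HomSeries Y Z) (h : HomSeries Z W) :
    (f ≫ₛ g) ≫ₛ h = f ≫ₛ g ≫ₛ h := by
  funext n
  simp only [comp, Preadditive.sum_comp, Preadditive.comp_sum, Category.assoc]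
  rw [sum_sigma', sum_sigma']
  apply sum_nbij' (fun x => ⟨(x.2.1, x.2.2 + x.1.2), (x.2.2, x.1.2)⟩)
    (fun x => ⟨(x.1.1 + x.2.1, x.2.2), (x.1.1, x.2.1)⟩)
  all_goals first
    | rfl
    | rintro ⟨⟨a, b⟩, c, d⟩ hx
      simp only [mem_sigma, HasAntidiagonal.mem_antidiagonal, Sigma.mk.injEq, Prod.mk.injEq,
        heq_eq_eq, and_true, true_and] at hx ⊢ <;> omega

theorem comp_assoc_of_eq {f : HomSeries X Y} {g : HomSeries Y Z} {f' : HomSeries X Y'}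
    {g' : HomSeries Y' Z} (h : f ≫ₛ g = f' ≫ₛ g') (k : HomSeries Z W) :
    f ≫ₛ g ≫ₛ k = f' ≫ₛ g' ≫ₛ k := by
  rw [← comp_assoc, h, comp_assoc]

theorem sub_comp (f f' : HomSeries X Y) (g : HomSeries Y Z) :
    (f - f') ≫ₛ g = f ≫ₛ g - f' ≫ₛ g := by
  funext n
  simp [comp, Preadditive.sub_comp, sum_sub_distrib]

theorem comp_sub (f : HomSeries X Y) (g g' : HomSeries Y Z) :
    f ≫ₛ (g - g') = f ≫ₛ g - f ≫ₛ g' := by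
  funext n
  simp [comp, Preadditive.comp_sub, sum_sub_distrib]

theorem comp_apply_zero (f : HomSeries X Y) (g : HomSeries Y Z) : (f ≫ₛ g) 0 = f 0 ≫ g 0 := by
  simp [comp]

theorem comp_eq_comp_of_commute {f : HomSeries X Y} {g : HomSeries Y Z} {f' : HomSeries X Y'}
    {g' : HomSeries Y' Z} (h : ∀ k m, f k ≫ g m = f' m ≫ g' k) : f ≫ₛ g = f' ≫ₛ g' := by
  funext n
  rw [comp, comp, ← Nat.sum_antidiagonal_swap]
  exact sum_congr rfl fun p _ => h p.2 p.1

def VanishesBelow (M : ℕ) (f : HomSeries X Y) : Prop := ∀ n < M, f n = 0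

theorem VanishesBelow.comp_left {M : ℕ} {f : HomSeries X Y} (hf : f.VanishesBelow M)
    (g : HomSeries Y Z) : (f ≫ₛ g).VanishesBelow M := fun n hn =>
  sum_eq_zero fun p hp => by
    rw [hf p.1 (by rw [HasAntidiagonal.mem_antidiagonal] at hp; omega), Limits.zero_comp]

theorem VanishesBelow.comp_right {M : ℕ} (f : HomSeries X Y) {g : HomSeries Y Z}
    (hg : g.VanishesBelow M) : (f ≫ₛ g).VanishesBelow M := fun n hn =>
  sum_eq_zero fun p hp => by
    rw [hg p.2 (by rw [HasAntidiagonal.mem_antidiagonal] at hp; omega), Limits.comp_zero]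

theorem comp_apply_of_vanishesBelow_left {M : ℕ} {f : HomSeries X Y} (hf : f.VanishesBelow M)
    (g : HomSeries Y Z) : (f ≫ₛ g) M = f M ≫ g 0 := by
  refine sum_eq_single (M, 0) (fun p hp hne => ?_) (by simp)
  rw [HasAntidiagonal.mem_antidiagonal] at hp
  rw [hf p.1 (by contrapose! hne; ext <;> simp <;> omega), Limits.zero_comp]

theorem comp_apply_of_vanishesBelow_right {M : ℕ} (f : HomSeries X Y) {g : HomSeries Y Z}
    (hg : g.VanishesBelow M) : (f ≫ₛ g) M = f 0 ≫ g M := by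
  refine sum_eq_single (0, M) (fun p hp hne => ?_) (by simp)
  rw [HasAntidiagonal.mem_antidiagonal] at hp
  rw [hg p.2 (by contrapose! hne; ext <;> simp <;> omega), Limits.comp_zero]

end Preadditive

variable [MonoidalCategory C] {X Y Z : C}

def whiskerLeft (X : C) (f : HomSeries Y Z) : HomSeries (X ⊗ Y) (X ⊗ Z) := fun n => X ◁ f n

def whiskerRight (f : HomSeries Y Z) (X : C) : HomSeries (Y ⊗ X) (Z ⊗ X) := fun n => f n ▷ X

infixr:81 " ◁ₛ " => HomSeries.whiskerLeft

infixl:81 " ▷ₛ " => HomSeries.whiskerRight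

@[simp]
theorem whiskerLeft_apply (X : C) (f : HomSeries Y Z) (n : ℕ) : (X ◁ₛ f) n = X ◁ f n := rfl

@[simp]
theorem whiskerRight_apply (f : HomSeries Y Z) (X : C) (n : ℕ) : (f ▷ₛ X) n = f n ▷ X := rfl

variable [Preadditive C] [MonoidalPreadditive C] {W : C}

theorem whiskerLeft_comp (X : C) (f : HomSeries Y Z) (g : HomSeries Z W) :
    X ◁ₛ (f ≫ₛ g) = (X ◁ₛ f) ≫ₛ (X ◁ₛ g) := by
  funext n
  simp [whiskerLeft, comp, whiskerLeft_sum]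

theorem comp_whiskerRight (f : HomSeries Y Z) (g : HomSeries Z W) (X : C) :
    (f ≫ₛ g) ▷ₛ X = (f ▷ₛ X) ≫ₛ (g ▷ₛ X) := by
  funext n
  simp [whiskerRight, comp, sum_whiskerRight]

theorem whiskerLeft_sub (X : C) (f g : HomSeries Y Z) : X ◁ₛ (f - g) = X ◁ₛ f - X ◁ₛ g :=
  funext fun _ => ((tensoringLeft C).obj X).map_sub

theorem sub_whiskerRight (f g : HomSeries Y Z) (X : C) : (f - g) ▷ₛ X = f ▷ₛ X - g ▷ₛ X :=
  funext fun _ => ((tensoringRight C).obj X).map_sub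

theorem VanishesBelow.whiskerLeft {M : ℕ} (X : C) {f : HomSeries Y Z} (hf : f.VanishesBelow M) :
    (X ◁ₛ f).VanishesBelow M := fun n hn => by
  simp [HomSeries.whiskerLeft, hf n hn]

theorem VanishesBelow.whiskerRight {M : ℕ} {f : HomSeries Y Z} (hf : f.VanishesBelow M) (X : C) :
    (f ▷ₛ X).VanishesBelow M := fun n hn => by
  simp [HomSeries.whiskerRight, hf n hn]

end HomSeries

section

variable {C : Type*} [Category C] [MonoidalCategory C]

/-- The deformed associator `∑ βₙ εⁿ`, stored as the family of its coefficients `βₙ`. -/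
abbrev AssocFamily (C : Type*) [Category C] [MonoidalCategory C] :=
  ℕ → ∀ A B C' : C, (A ⊗ B) ⊗ C' ⟶ A ⊗ (B ⊗ C')

namespace AssocFamily

variable (β : AssocFamily C)

def series (A B C' : C) : HomSeries ((A ⊗ B) ⊗ C') (A ⊗ (B ⊗ C')) := fun n => β n A B C'

@[simp]
theorem series_apply (A B C' : C) (n : ℕ) : β.series A B C' n = β n A B C' := rfl

def IsNatural : Prop :=
  ∀ (i : ℕ) {A A' B B' X X' : C} (f : A ⟶ A') (g : B ⟶ B') (h : X ⟶ X'),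
    ((f ⊗ₘ g) ⊗ₘ h) ≫ β i A' B' X' = β i A B X ≫ (f ⊗ₘ (g ⊗ₘ h))

end AssocFamily

variable [Preadditive C]

theorem obstruction_congr {αf αg : AssocFamily C} {N : ℕ} (h : ∀ k < N, αf k = αg k)
    (A B C' D : C) : obstruction αf N A B C' D = obstruction αg N A B C' D := by
  unfold obstruction
  congr 1
  · refine sum_congr rfl fun p hp => ?_
    rw [mem_filter] at hp
    rw [h p.1 hp.2.1, h p.2 hp.2.2]
  · refine sum_congr rfl fun p _ => sum_congr rfl fun q _ => ?_
    split_ifs with hlt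
    · rw [h p.1 hlt.1, h q.1 hlt.2.1, h q.2 hlt.2.2]
    · rfl

namespace AssocFamily

open HomSeries

variable (β : AssocFamily C)

def truncate (M : ℕ) : AssocFamily C := fun n A B C' => if n < M then β n A B C' else 0

def pentagonDefect (A B C' D : C) : HomSeries (((A ⊗ B) ⊗ C') ⊗ D) (A ⊗ (B ⊗ (C' ⊗ D))) :=
  β.series (A ⊗ B) C' D ≫ₛ β.series A B (C' ⊗ D)
    - (β.series A B C' ▷ₛ D) ≫ₛ β.series A (B ⊗ C') D ≫ₛ (A ◁ₛ β.series B C' D)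

/-- `delta4` with the associator in the padding replaced by the deformed associator `β`. -/
def delta4 (P : ∀ A B C' D : C, HomSeries (((A ⊗ B) ⊗ C') ⊗ D) (A ⊗ (B ⊗ (C' ⊗ D))))
    (A B C' D E : C) :
    HomSeries ((((A ⊗ B) ⊗ C') ⊗ D) ⊗ E) (A ⊗ (B ⊗ (C' ⊗ (D ⊗ E)))) :=
  - ((β.series A B C' ▷ₛ D ▷ₛ E) ≫ₛ (β.series A (B ⊗ C') D ▷ₛ E) ≫ₛ
      β.series A ((B ⊗ C') ⊗ D) E ≫ₛ (A ◁ₛ P B C' D E))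
  + (P (A ⊗ B) C' D E ≫ₛ β.series A B (C' ⊗ (D ⊗ E)))
  - ((β.series A B C' ▷ₛ D ▷ₛ E) ≫ₛ P A (B ⊗ C') D E ≫ₛ (A ◁ₛ β.series B C' (D ⊗ E)))
  + ((β.series (A ⊗ B) C' D ▷ₛ E) ≫ₛ P A B (C' ⊗ D) E ≫ₛ (A ◁ₛ B ◁ₛ β.series C' D E))
  - (β.series ((A ⊗ B) ⊗ C') D E ≫ₛ P A B C' (D ⊗ E))
  + ((P A B C' D ▷ₛ E) ≫ₛ β.series A (B ⊗ (C' ⊗ D)) E ≫ₛ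
      (A ◁ₛ β.series B (C' ⊗ D) E) ≫ₛ (A ◁ₛ B ◁ₛ β.series C' D E))

variable {β}

theorem truncate_of_lt {M n : ℕ} (h : n < M) : β.truncate M n = β n :=
  funext fun _ => funext fun _ => funext fun _ => if_pos h

theorem truncate_self (M : ℕ) : β.truncate M M = 0 :=
  funext fun _ => funext fun _ => funext fun _ => if_neg (lt_irrefl M)

theorem obstruction_truncate {M N : ℕ} (h : N ≤ M) (A B C' D : C) :
    obstruction (β.truncate M) N A B C' D = obstruction β N A B C' D :=
  obstruction_congr (fun _ hk => truncate_of_lt (hk.trans_le h)) A B C' D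

theorem IsNatural.truncate (h : β.IsNatural) (M : ℕ) : (β.truncate M).IsNatural := by
  intro i A A' B B' X X' f g k
  by_cases hi : i < M
  · simpa [AssocFamily.truncate, hi] using h i f g k
  · simp [AssocFamily.truncate, hi]

theorem IsNatural.naturality_left (h : β.IsNatural) (A B C' D E : C) :
    (β.series A B C' ▷ₛ D ▷ₛ E) ≫ₛ β.series (A ⊗ (B ⊗ C')) D E
      = β.series ((A ⊗ B) ⊗ C') D E ≫ₛ (β.series A B C' ▷ₛ (D ⊗ E)) :=
  comp_eq_comp_of_commute fun k m => by
    simpa only [series_apply, HomSeries.whiskerLeft_apply, HomSeries.whiskerRight_apply,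
      tensorHom_id, id_tensorHom, id_whiskerRight, whiskerLeft_id]
      using h m (β k A B C') (𝟙 D) (𝟙 E)

theorem IsNatural.naturality_middle (h : β.IsNatural) (A B C' D E : C) :
    ((A ◁ₛ β.series B C' D) ▷ₛ E) ≫ₛ β.series A (B ⊗ (C' ⊗ D)) E
      = β.series A ((B ⊗ C') ⊗ D) E ≫ₛ (A ◁ₛ (β.series B C' D ▷ₛ E)) :=
  comp_eq_comp_of_commute fun k m => by
    simpa only [series_apply, HomSeries.whiskerLeft_apply, HomSeries.whiskerRight_apply,
      tensorHom_id, id_tensorHom, id_whiskerRight, whiskerLeft_id]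
      using h m (𝟙 A) (β k B C' D) (𝟙 E)

theorem IsNatural.naturality_right (h : β.IsNatural) (A B C' D E : C) :
    ((A ⊗ B) ◁ₛ β.series C' D E) ≫ₛ β.series A B (C' ⊗ (D ⊗ E))
      = β.series A B ((C' ⊗ D) ⊗ E) ≫ₛ (A ◁ₛ B ◁ₛ β.series C' D E) :=
  comp_eq_comp_of_commute fun k m => by
    simpa only [series_apply, HomSeries.whiskerLeft_apply, HomSeries.whiskerRight_apply,
      tensorHom_id, id_tensorHom, id_whiskerRight, whiskerLeft_id]
      using h m (𝟙 A) (𝟙 B) (β k C' D E)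

theorem pentagonDefect_apply_zero (hβ₀ : ∀ A B C' : C, β 0 A B C' = (α_ A B C').hom)
    (A B C' D : C) : β.pentagonDefect A B C' D 0 = 0 := by
  simp [pentagonDefect, comp_apply_zero, hβ₀]

theorem pentagonDefect_apply_of_pos (hβ₀ : ∀ A B C' : C, β 0 A B C' = (α_ A B C').hom)
    {n : ℕ} (hn : 0 < n) (A B C' D : C) :
    β.pentagonDefect A B C' D n = delta3 (β n) A B C' D + obstruction β n A B C' D := by
  simp only [pentagonDefect, Pi.sub_apply, comp, Preadditive.comp_sum, series_apply,
    HomSeries.whiskerLeft_apply, HomSeries.whiskerRight_apply]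
  rw [Nat.sum_antidiagonal_eq_ends_add hn,
    Nat.sum_antidiagonal_sum_antidiagonal_eq_ends_add hn
      (fun i j k => (β i A B C' ▷ D) ≫ β j A (B ⊗ C') D ≫ (A ◁ β k B C' D))]
  simp only [delta3, obstruction, hβ₀]
  abel

variable [MonoidalPreadditive C]

theorem IsNatural.delta4_pentagonDefect (h : β.IsNatural) (A B C' D E : C) :
    β.delta4 β.pentagonDefect A B C' D E = 0 := by
  simp only [AssocFamily.delta4, pentagonDefect, sub_comp, comp_sub, whiskerLeft_sub,
    sub_whiskerRight, HomSeries.whiskerLeft_comp, HomSeries.comp_whiskerRight, comp_assoc]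
  rw [← comp_assoc_of_eq (h.naturality_middle A B C' D E),
    comp_assoc_of_eq (h.naturality_left A B C' D E), h.naturality_right A B C' D E]
  abel

theorem delta4_apply_of_vanishesBelow (hβ₀ : ∀ A B C' : C, β 0 A B C' = (α_ A B C').hom)
    {P : ∀ A B C' D : C, HomSeries (((A ⊗ B) ⊗ C') ⊗ D) (A ⊗ (B ⊗ (C' ⊗ D)))} {M : ℕ}
    (hP : ∀ A B C' D : C, (P A B C' D).VanishesBelow M) (A B C' D E : C) :
    β.delta4 P A B C' D E M = _root_.delta4 (fun A B C' D => P A B C' D M) A B C' D E := by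
  simp (maxDischargeDepth := 5) only [AssocFamily.delta4, _root_.delta4, Pi.add_apply,
    Pi.sub_apply, Pi.neg_apply, comp_apply_of_vanishesBelow_right,
    comp_apply_of_vanishesBelow_left, comp_apply_zero, VanishesBelow.comp_left,
    VanishesBelow.comp_right, VanishesBelow.whiskerLeft, VanishesBelow.whiskerRight, hP,
    series_apply, HomSeries.whiskerLeft_apply, HomSeries.whiskerRight_apply, hβ₀]

end AssocFamily

end

theorem delta3_zero (A B C' D : C) :
    delta3 (0 : ∀ A B C' : C, (A ⊗ B) ⊗ C' ⟶ A ⊗ (B ⊗ C')) A B C' D = 0 := by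
  simp [delta3]

theorem obstruction_is_cocycle
    (M : ℕ) (hM : 0 < M)
    (αf : ℕ → ∀ A B C' : C, (A ⊗ B) ⊗ C' ⟶ A ⊗ (B ⊗ C'))
    (hα₀ : ∀ A B C' : C, αf 0 A B C' = (α_ A B C').hom)
    (hnat : ∀ (i : ℕ) {A A' B B' X X' : C} (f : A ⟶ A') (g : B ⟶ B') (h : X ⟶ X'),
      ((f ⊗ₘ g) ⊗ₘ h) ≫ αf i A' B' X' = αf i A B X ≫ (f ⊗ₘ (g ⊗ₘ h)))
    (hdef : ∀ N, 0 < N → N < M → ∀ A B C' D : C,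
      delta3 (αf N) A B C' D + obstruction αf N A B C' D = 0) :
    ∀ A B C' D E : C, delta4 (obstruction αf M) A B C' D E = 0 := by
  intro A B C' D E
  set β : AssocFamily C := AssocFamily.truncate αf M
  have hβ₀ : ∀ A B C' : C, β 0 A B C' = (α_ A B C').hom := by
    simpa only [β, AssocFamily.truncate_of_lt hM] using hα₀
  have hlow : ∀ A B C' D : C, (β.pentagonDefect A B C' D).VanishesBelow M := by
    intro A B C' D n hn
    rcases n.eq_zero_or_pos with rfl | hpos
    · exact AssocFamily.pentagonDefect_apply_zero hβ₀ A B C' D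
    · rw [AssocFamily.pentagonDefect_apply_of_pos hβ₀ hpos]
      simpa only [β, AssocFamily.truncate_of_lt hn, AssocFamily.obstruction_truncate hn.le]
        using hdef n hpos hn A B C' D
  have htop : ∀ A B C' D : C, β.pentagonDefect A B C' D M = obstruction αf M A B C' D := by
    intro A B C' D
    rw [AssocFamily.pentagonDefect_apply_of_pos hβ₀ hM]
    simp only [β, AssocFamily.truncate_self, delta3_zero, zero_add,
      AssocFamily.obstruction_truncate le_rfl]
  calc delta4 (obstruction αf M) A B C' D E
      = delta4 (fun A B C' D => β.pentagonDefect A B C' D M) A B C' D E := by simp only [htop]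
    _ = β.delta4 β.pentagonDefect A B C' D E M :=
      (AssocFamily.delta4_apply_of_vanishesBelow hβ₀ hlow A B C' D E).symm
    _ = 0 := by rw [(AssocFamily.IsNatural.truncate hnat M).delta4_pentagonDefect]; rfl
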